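/- arXiv:2203.10987 — 2 statements merged into one kernel-verified Lean document; each statement's English description precedes it below -/
import Mathlib

section
/- Let E be a directed graph. An admissible pair (H,S) of E is reflexive if and only if R(H) − H ⊆ R(H⊥) and S = B_H. -/
/-! Heredity of `H` gives `H ⊆ H⊥⊥`, and a vertex outside `H` fails to lie in `H⊥⊥` exactly when it
reaches `H⊥`; vertices outside `R(H)` lie in `H⊥` anyway, so `H = H⊥⊥` is the condition
`R(H) − H ⊆ R(H⊥)`. For the second component, no vertex breaks both `W` and `W⊥`: every edge has
range outside `W` or outside `W⊥`, so an infinite emitter cannot have only finitely many of each.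
Hence `S⊥ ⊆ B_{H⊥}` is disjoint from `B_{H⊥⊥}`, and `S⊥⊥ = B_{H⊥⊥}` for every pair. -/

namespace GraphAnn

variable {V E : Type*}

/-- `u ≥ v`: there is a (possibly trivial) path from `u` to `v`. -/
def Reach (s r : E → V) : V → V → Prop :=
  Relation.ReflTransGen (fun a b => ∃ e, s e = a ∧ r e = b)

/-- The root `R(W)` of a set of vertices. -/
def Root (s r : E → V) (W : Set V) : Set V :=
  {u | ∃ v ∈ W, Reach s r u v}

def Hereditary (s r : E → V) (H : Set V) : Prop :=
  ∀ u v, u ∈ H → Reach s r u v → v ∈ H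

def IsSink (s : E → V) (v : V) : Prop := ∀ e : E, s e ≠ v

def IsInfiniteEmitter (s : E → V) (v : V) : Prop := {e : E | s e = v}.Infinite

def IsRegular (s : E → V) (v : V) : Prop := ¬ IsSink s v ∧ ¬ IsInfiniteEmitter s v

def Saturated (s r : E → V) (H : Set V) : Prop :=
  ∀ v, IsRegular s v → (∀ e : E, s e = v → r e ∈ H) → v ∈ H

/-- `V⊥ = E⁰ − R(V)`. -/
def perp (s r : E → V) (W : Set V) : Set V := {v | v ∉ Root s r W}

/-- Breaking vertices `B_H`. -/
def Breaking (s r : E → V) (H : Set V) : Set V :=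
  {v | v ∉ H ∧ IsInfiniteEmitter s v ∧
    {e : E | s e = v ∧ r e ∉ H}.Nonempty ∧ {e : E | s e = v ∧ r e ∉ H}.Finite}

/-- `(H,S)` is an admissible pair. -/
def Admissible (s r : E → V) (H S : Set V) : Prop :=
  Hereditary s r H ∧ Saturated s r H ∧ S ⊆ Breaking s r H

/-- `S⊥ = B_{H⊥} − S`. -/
def Sperp (s r : E → V) (H S : Set V) : Set V := Breaking s r (perp s r H) \ S

/-- A cycle: a closed path of positive length in which distinct edges have
distinct sources. -/
structure GCycle (s r : E → V) where
  edges : List E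
  ne : edges ≠ []
  chain : edges.Chain' (fun e f => r e = s f)
  closed : r (edges.getLast ne) = s (edges.head ne)
  srcNodup : (edges.map s).Nodup

/-- The vertex set `c⁰` of a cycle. -/
def GCycle.verts {s r : E → V} (c : GCycle s r) : Set V :=
  {v | ∃ e ∈ c.edges, s e = v}

/-- A cycle has an exit. -/
def GCycle.HasExit {s r : E → V} (c : GCycle s r) : Prop :=
  ∃ e, s e ∈ c.verts ∧ e ∉ c.edges

/-- An extreme cycle: it has an exit and every exit returns. -/
def GCycle.Extreme {s r : E → V} (c : GCycle s r) : Prop :=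
  c.HasExit ∧ ∀ v ∈ c.verts, ∀ w, Reach s r v w → ∃ u ∈ c.verts, Reach s r w u

/-- The vertex set `α⁰` of an infinite path `α`. -/
def InfPathVerts (s : E → V) (α : ℕ → E) : Set V := {v | ∃ n, s (α n) = v}

/-- Conditions (a), (b), (c): the graph is all-reflexive. -/
def AllReflexiveGraph (s r : E → V) : Prop :=
  (∀ c : GCycle s r, ¬ c.HasExit ∨ c.Extreme) ∧
  (∀ v, IsInfiniteEmitter s v → ∃ c : GCycle s r, v ∈ c.verts) ∧
  (∀ α : ℕ → E, (∀ n, r (α n) = s (α (n + 1))) →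
    {e : E | s e ∈ InfPathVerts s α ∧ r e ∉ Root s r (InfPathVerts s α)}.Finite)

section

variable (s r : E → V)

lemma subset_root (W : Set V) : W ⊆ Root s r W :=
  fun v hv => ⟨v, hv, Relation.ReflTransGen.refl⟩

variable {s r}

lemma Hereditary.subset_perp_perp {H : Set V} (hH : Hereditary s r H) :
    H ⊆ perp s r (perp s r H) := by
  rintro v hv ⟨w, hw, hvw⟩
  exact hw (subset_root s r H (hH v w hv hvw))

variable (s r)

lemma perp_perp_subset_iff (H : Set V) :
    perp s r (perp s r H) ⊆ H ↔ Root s r H \ H ⊆ Root s r (perp s r H) := by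
  constructor
  · rintro h v ⟨-, hvH⟩
    by_contra hv
    exact hvH (h hv)
  · intro h v hv
    by_contra hvH
    by_cases hroot : v ∈ Root s r H
    · exact hv (h ⟨hroot, hvH⟩)
    · exact hv (subset_root s r _ hroot)

lemma disjoint_breaking_perp (W : Set V) :
    Disjoint (Breaking s r W) (Breaking s r (perp s r W)) := by
  rw [Set.disjoint_left]
  rintro v ⟨-, hinf, -, hfin⟩ ⟨-, -, -, hfin'⟩
  refine hinf ((hfin.union hfin').subset fun e he => ?_)
  by_cases hr : r e ∈ W
  · exact Or.inr ⟨he, fun hp => hp (subset_root s r W hr)⟩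
  · exact Or.inl ⟨he, hr⟩

lemma sperp_sperp (H S : Set V) :
    Sperp s r (perp s r H) (Sperp s r H S) = Breaking s r (perp s r (perp s r H)) :=
  sdiff_eq_left.mpr
    ((disjoint_breaking_perp s r (perp s r H)).symm.mono_right Set.sdiff_subset)

end

/-- An admissible pair `(H,S)` is reflexive iff `R(H) − H ⊆ R(H⊥)` and
`S = B_H`. -/
theorem reflexive_iff (s r : E → V) (H S : Set V) (h : Admissible s r H S) :
    (H = perp s r (perp s r H) ∧
        S = Sperp s r (perp s r H) (Sperp s r H S)) ↔
      (Root s r H \ H ⊆ Root s r (perp s r H) ∧ S = Breaking s r H) := by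
  have hH : H = perp s r (perp s r H) ↔ Root s r H \ H ⊆ Root s r (perp s r H) := by
    rw [← perp_perp_subset_iff, Set.Subset.antisymm_iff]
    exact and_iff_right h.1.subset_perp_perp
  rw [sperp_sperp, ← hH]
  exact and_congr_right fun hHH => by rw [← hHH]

end GraphAnn
end

section
/- Let E be an all-reflexive directed graph and let (H,S) be a reflexive admissible pair of E (so that S = B_H). Then the quotient graph E/(H,S), namely the graph with vertex set E⁰ − H and edge set {e ∈ E¹ : r(e) ∉ H} (with the source and range maps inherited from E), is all-reflexive. -/
/-! The quotient `E/(H,S)` embeds in `E`, so cycles, exits, infinite emitters and infinite paths of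
the quotient are cycles, exits, infinite emitters and infinite paths of `E`. Conversely, since `H`
is hereditary, a path of `E` ending outside `H` never meets `H` and hence lies in the quotient;
so reachability between vertices outside `H` is the same in both graphs, which brings each of
the conditions (a), (b), (c) from `E` down to the quotient. -/

namespace GraphAnn

variable {V E : Type*}

variable {s r : E → V}

theorem Hereditary.notMem_of_reach {H : Set V} (hH : Hereditary s r H) {u v : V}
    (huv : Reach s r u v) (hv : v ∉ H) : u ∉ H :=
  fun hu => hv (hH u v hu huv)

namespace GCycle

theorem reach_head (c : GCycle s r) {e : E} (he : e ∈ c.edges) :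
    Reach s r (s e) (s (c.edges.head c.ne)) :=
  c.chain.backwards_induction (fun e => Reach s r (s e) (s (c.edges.head c.ne))) c.edges
    (fun _ _ hxy hy => Relation.ReflTransGen.head ⟨_, rfl, hxy⟩ hy)
    (fun _ => .single ⟨_, rfl, c.closed⟩) e he

theorem head_reach (c : GCycle s r) {e : E} (he : e ∈ c.edges) :
    Reach s r (s (c.edges.head c.ne)) (s e) :=
  c.chain.induction (fun e => Reach s r (s (c.edges.head c.ne)) (s e)) c.edges
    (fun _ _ hxy hx => hx.tail ⟨_, rfl, hxy⟩) (fun _ => .refl) e he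

theorem reach_of_mem_verts (c : GCycle s r) {u w : V} (hu : u ∈ c.verts) (hw : w ∈ c.verts) :
    Reach s r u w := by
  obtain ⟨e, he, rfl⟩ := hu
  obtain ⟨f, hf, rfl⟩ := hw
  exact (c.reach_head he).trans (c.head_reach hf)

theorem range_mem_verts (c : GCycle s r) {e : E} (he : e ∈ c.edges) : r e ∈ c.verts := by
  obtain ⟨i, hi, rfl⟩ := List.mem_iff_getElem.mp he
  by_cases hlast : i + 1 < c.edges.length
  · exact ⟨_, List.getElem_mem hlast, (List.isChain_iff_getElem.mp c.chain i hlast).symm⟩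
  · have : c.edges.getLast c.ne = c.edges[i] := by
      rw [List.getLast_eq_getElem]; congr 1; omega
    exact ⟨_, List.head_mem c.ne, by rw [← this, c.closed]⟩

end GCycle

section Hom

variable {V' E' : Type*} {s' r' : E' → V'} {f : V' → V} {g : E' → E}

theorem Reach.map (hs : ∀ e, f (s' e) = s (g e)) (hr : ∀ e, f (r' e) = r (g e)) {u v : V'}
    (h : Reach s' r' u v) : Reach s r (f u) (f v) := by
  induction h with
  | refl => exact .refl
  | tail _ hstep ih =>
    obtain ⟨e, rfl, rfl⟩ := hstep
    exact ih.tail ⟨g e, (hs e).symm, (hr e).symm⟩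

theorem IsInfiniteEmitter.map (hg : Function.Injective g) (hs : ∀ e, f (s' e) = s (g e))
    {v : V'} (hv : IsInfiniteEmitter s' v) : IsInfiniteEmitter s (f v) := by
  refine (hv.image hg.injOn).mono ?_
  rintro _ ⟨e, rfl, rfl⟩
  exact (hs e).symm

theorem InfPathVerts.comp (hs : ∀ e, f (s' e) = s (g e)) (α : ℕ → E') :
    InfPathVerts s (g ∘ α) = f '' InfPathVerts s' α := by
  ext v
  simp [InfPathVerts, hs]

namespace GCycle

theorem verts_eq_image (hs : ∀ e, f (s' e) = s (g e)) {c' : GCycle s' r'} {c : GCycle s r}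
    (hc : c'.edges.map g = c.edges) : c.verts = f '' c'.verts := by
  ext v
  simp [verts, ← hc, hs]

def map (c : GCycle s' r') (hf : Function.Injective f) (hs : ∀ e, f (s' e) = s (g e))
    (hr : ∀ e, f (r' e) = r (g e)) : GCycle s r where
  edges := c.edges.map g
  ne := by simpa using c.ne
  chain := List.isChain_map_of_isChain g (fun e e' h => by rw [← hs, ← hr, h]) c.chain
  closed := by rw [List.getLast_map, List.head_map, ← hs, ← hr, c.closed]
  srcNodup := by
    rw [List.map_map, show s ∘ g = f ∘ s' from funext fun e => (hs e).symm, ← List.map_map]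
    exact c.srcNodup.map hf

def comap (c : GCycle s r) (hf : Function.Injective f) (hs : ∀ e, f (s' e) = s (g e))
    (hr : ∀ e, f (r' e) = r (g e)) (l : List E') (hl : l.map g = c.edges) : GCycle s' r' where
  edges := l
  ne := by rintro rfl; exact c.ne hl.symm
  chain := List.isChain_of_isChain_map g (fun e e' h => hf (by rw [hs, hr, h]))
    (hl ▸ c.chain)
  closed := by
    have := c.closed
    simp only [← hl, List.getLast_map, List.head_map, ← hs, ← hr] at this
    exact hf this
  srcNodup := by
    refine List.Nodup.of_map f ?_
    rw [List.map_map, show f ∘ s' = s ∘ g from funext hs, ← List.map_map, hl]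
    exact c.srcNodup

theorem HasExit.map (hg : Function.Injective g) (hs : ∀ e, f (s' e) = s (g e))
    {c' : GCycle s' r'} {c : GCycle s r} (hc : c'.edges.map g = c.edges) (h : c'.HasExit) :
    c.HasExit := by
  obtain ⟨e, he, hec⟩ := h
  refine ⟨g e, ?_, ?_⟩
  · rw [verts_eq_image hs hc, ← hs]
    exact Set.mem_image_of_mem f he
  · rw [← hc, List.mem_map_of_injective hg]
    exact hec

end GCycle

end Hom

section Quotient

variable {H : Set V} {s' r' : {e : E // r e ∉ H} → {v : V // v ∉ H}}

theorem reach_quotient_iff (hs : ∀ e, (s' e : V) = s e.1) (hr : ∀ e, (r' e : V) = r e.1)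
    (hH : Hereditary s r H) {u v : {v : V // v ∉ H}} :
    Reach s' r' u v ↔ Reach s r u v := by
  refine ⟨Reach.map hs hr, fun h => ?_⟩
  obtain ⟨v, hv⟩ := v
  change Reach s r u v at h
  induction h with
  | refl => exact .refl
  | @tail b c _ hbc ih =>
    obtain ⟨e, rfl, rfl⟩ := hbc
    have hb : s e ∉ H := hH.notMem_of_reach (.single ⟨e, rfl, rfl⟩) hv
    exact (ih hb).tail ⟨⟨e, hv⟩, Subtype.ext (hs _), Subtype.ext (hr _)⟩

theorem mem_root_quotient_iff (hs : ∀ e, (s' e : V) = s e.1) (hr : ∀ e, (r' e : V) = r e.1)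
    (hH : Hereditary s r H) {X : Set {v : V // v ∉ H}} {u : {v : V // v ∉ H}} :
    u ∈ Root s' r' X ↔ (u : V) ∈ Root s r (Subtype.val '' X) := by
  simp [Root, reach_quotient_iff hs hr hH]

theorem GCycle.Extreme.of_quotient (hs : ∀ e, (s' e : V) = s e.1)
    (hr : ∀ e, (r' e : V) = r e.1) (hH : Hereditary s r H) {c' : GCycle s' r'}
    {c : GCycle s r} (hc : c'.edges.map Subtype.val = c.edges) (hexit : c'.HasExit)
    (hext : c.Extreme) : c'.Extreme := by
  have hverts := GCycle.verts_eq_image hs hc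
  refine ⟨hexit, fun v hv w hvw => ?_⟩
  obtain ⟨u, hu, hwu⟩ := hext.2 v (hverts ▸ Set.mem_image_of_mem _ hv) w
    ((reach_quotient_iff hs hr hH).1 hvw)
  rw [hverts] at hu
  obtain ⟨u, hu, rfl⟩ := hu
  exact ⟨u, hu, (reach_quotient_iff hs hr hH).2 hwu⟩

theorem exists_quotient_cycle_of_mem_verts (hs : ∀ e, (s' e : V) = s e.1)
    (hr : ∀ e, (r' e : V) = r e.1) (hH : Hereditary s r H) (c : GCycle s r)
    {v : {v : V // v ∉ H}} (hv : (v : V) ∈ c.verts) :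
    ∃ c' : GCycle s' r', v ∈ c'.verts := by
  have hrange : ∀ e ∈ c.edges, r e ∉ H := fun e he =>
    hH.notMem_of_reach (c.reach_of_mem_verts (c.range_mem_verts he) hv) v.2
  have hlift : (c.edges.pmap Subtype.mk hrange).map Subtype.val = c.edges := by
    simp [List.map_pmap]
  let c' := c.comap Subtype.val_injective hs hr _ hlift
  rw [GCycle.verts_eq_image hs (c' := c') hlift] at hv
  obtain ⟨w, hw, hwv⟩ := hv
  exact ⟨c', Subtype.ext hwv ▸ hw⟩

theorem finite_exits_quotient (hs : ∀ e, (s' e : V) = s e.1) (hr : ∀ e, (r' e : V) = r e.1)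
    (hH : Hereditary s r H) (α : ℕ → {e : E // r e ∉ H})
    (hfin : {e : E | s e ∈ InfPathVerts s (Subtype.val ∘ α) ∧
      r e ∉ Root s r (InfPathVerts s (Subtype.val ∘ α))}.Finite) :
    {e | s' e ∈ InfPathVerts s' α ∧ r' e ∉ Root s' r' (InfPathVerts s' α)}.Finite := by
  refine (hfin.preimage Subtype.val_injective.injOn).subset ?_
  rintro e ⟨hsrc, hrange⟩
  rw [Set.mem_preimage, Set.mem_ofPred_eq, InfPathVerts.comp hs, ← hs, ← hr]
  exact ⟨Set.mem_image_of_mem _ hsrc, (mem_root_quotient_iff hs hr hH).not.1 hrange⟩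

end Quotient

theorem quotient_all_reflexive_general (s r : E → V)
    (hAll : AllReflexiveGraph s r)
    (H S : Set V) (h : Admissible s r H S)
    (s' r' : {e : E // r e ∉ H} → {v : V // v ∉ H})
    (hs : ∀ e, (s' e : V) = s e.1) (hr : ∀ e, (r' e : V) = r e.1) :
    AllReflexiveGraph s' r' := by
  obtain ⟨hcycles, hemitters, hpaths⟩ := hAll
  have hH : Hereditary s r H := h.1
  refine ⟨fun c' => (em c'.HasExit).symm.imp_right fun hexit => ?_, fun v hv => ?_,
    fun α hα => ?_⟩
  · let c := c'.map Subtype.val_injective hs hr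
    have hext : c.Extreme :=
      (hcycles c).resolve_left (not_not.2 (hexit.map Subtype.val_injective hs rfl))
    exact hext.of_quotient hs hr hH rfl hexit
  · obtain ⟨c, hc⟩ := hemitters v (hv.map Subtype.val_injective hs)
    exact exists_quotient_cycle_of_mem_verts hs hr hH c hc
  · refine finite_exits_quotient hs hr hH α (hpaths _ fun n => ?_)
    simp only [Function.comp_apply, ← hs, ← hr, hα n]

/-- If `E` is all-reflexive and `(H,S)` is a reflexive admissible pair, then
the quotient graph `E/(H,S)` (with vertex set `E⁰ − H` and edges
`{e : r(e) ∉ H}`, source and range inherited from `E`) is all-reflexive. -/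
theorem quotient_all_reflexive (s r : E → V)
    (hAll : AllReflexiveGraph s r)
    (H S : Set V) (h : Admissible s r H S)
    (hrefl : H = perp s r (perp s r H) ∧
      S = Sperp s r (perp s r H) (Sperp s r H S))
    (s' r' : {e : E // r e ∉ H} → {v : V // v ∉ H})
    (hs : ∀ e, (s' e : V) = s e.1) (hr : ∀ e, (r' e : V) = r e.1) :
    AllReflexiveGraph s' r' :=
  quotient_all_reflexive_general s r hAll H S h s' r' hs hr

end GraphAnn
end
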